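/- arXiv:1705.02008 — 3 statements merged into one kernel-verified Lean document; each statement's English description precedes it below -/
import Mathlib

section
/- For any bounded set Ψ ⊆ ℝ₊^{n×n}, the max-algebraic joint spectral radius of the closure of the max-convex hull of Ψ equals the max-algebraic joint spectral radius of Ψ. -/
open scoped BigOperators

namespace MaxAlg

variable {n : ℕ}

/-- max-algebraic matrix product: (A ⊗ B) i j = max_k A i k * B k j -/
noncomputable def maxMul (A B : Fin n → Fin n → ℝ) : Fin n → Fin n → ℝ :=
  fun i j => ⨆ k : Fin n, A i k * B k j

/-- max-algebraic matrix-vector product -/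
noncomputable def maxVec (A : Fin n → Fin n → ℝ) (x : Fin n → ℝ) : Fin n → ℝ :=
  fun i => ⨆ j : Fin n, A i j * x j

/-- the identity matrix -/
def idMat (n : ℕ) : Fin n → Fin n → ℝ := fun i j => if i = j then 1 else 0

/-- maximal cycle geometric mean: max over simple cycles of the geometric
mean of the corresponding entries -/
noncomputable def mu (A : Fin n → Fin n → ℝ) : ℝ :=
  ⨆ k : Fin n, ⨆ c : {f : Fin (k.1 + 1) → Fin n // Function.Injective f},
    (∏ j : Fin (k.1 + 1), A (c.1 j) (c.1 (j + 1))) ^ ((1 : ℝ) / ((k.1 : ℝ) + 1))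

/-- entrywise supremum S(Ψ) of a set of matrices -/
noncomputable def Ssup (Ψ : Set (Fin n → Fin n → ℝ)) : Fin n → Fin n → ℝ :=
  fun i j => sSup ((fun A => A i j) '' Ψ)

/-- max-algebraic joint spectral radius, via μ(Ψ) = μ(S(Ψ)) -/
noncomputable def muSet (Ψ : Set (Fin n → Fin n → ℝ)) : ℝ := mu (Ssup Ψ)

/-- irreducibility of a nonnegative matrix -/
def Irred (A : Fin n → Fin n → ℝ) : Prop :=
  ∀ I : Set (Fin n), I.Nonempty → I ≠ Set.univ → ∃ i ∈ I, ∃ j, j ∉ I ∧ A i j ≠ 0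

/-- max-convex hull: finite combinations ⊕ αᵢ Aᵢ with αᵢ ≥ 0 and max αᵢ = 1 -/
def maxConv (M : Set (Fin n → Fin n → ℝ)) : Set (Fin n → Fin n → ℝ) :=
  {B | ∃ (k : ℕ) (α : Fin (k + 1) → ℝ) (A : Fin (k + 1) → (Fin n → Fin n → ℝ)),
    (∀ i, 0 ≤ α i) ∧ (∀ i, A i ∈ M) ∧ (⨆ i, α i) = 1 ∧
    B = fun i j => ⨆ l, α l * A l i j}

/-- max-span (max cone): finite combinations ⊕ αᵢ Aᵢ with αᵢ ≥ 0 -/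
def maxSpan (M : Set (Fin n → Fin n → ℝ)) : Set (Fin n → Fin n → ℝ) :=
  {B | ∃ (k : ℕ) (α : Fin (k + 1) → ℝ) (A : Fin (k + 1) → (Fin n → Fin n → ℝ)),
    (∀ i, 0 ≤ α i) ∧ (∀ i, A i ∈ M) ∧
    B = fun i j => ⨆ l, α l * A l i j}

/-- Ψ_⊗^m : set of max-products of m matrices from Ψ (Ψ_⊗^0 = {I}) -/
noncomputable def prodSet (Ψ : Set (Fin n → Fin n → ℝ)) : ℕ → Set (Fin n → Fin n → ℝ)
  | 0 => {idMat n}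
  | m + 1 => {C | ∃ A ∈ Ψ, ∃ B ∈ prodSet Ψ m, C = maxMul A B}

/-- a norm on ℝⁿ -/
structure NormOn (n : ℕ) where
  f : (Fin n → ℝ) → ℝ
  eq_zero : ∀ x, f x = 0 ↔ x = 0
  smul : ∀ (a : ℝ) (x : Fin n → ℝ), f (a • x) = |a| * f x
  add : ∀ x y : Fin n → ℝ, f (x + y) ≤ f x + f y

/-- a norm is monotone if |x| ≤ |y| entrywise implies ν(x) ≤ ν(y) -/
def NormOn.Mono (N : NormOn n) : Prop :=
  ∀ x y : Fin n → ℝ, (∀ i, |x i| ≤ |y i|) → N.f x ≤ N.f y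

/-- max-induced matrix norm η_‖·‖(A) = sup{‖A ⊗ x‖/‖x‖ : x ∈ ℝ₊ⁿ, x ≠ 0} -/
noncomputable def eta (N : NormOn n) (A : Fin n → Fin n → ℝ) : ℝ :=
  ⨆ x : {x : Fin n → ℝ // (∀ i, 0 ≤ x i) ∧ x ≠ 0}, N.f (maxVec A x.1) / N.f x.1

end MaxAlg

namespace MaxAlg

lemma subset_maxConv {n : ℕ} (Ψ : Set (Fin n → Fin n → ℝ)) : Ψ ⊆ maxConv Ψ := by
  intro A hA
  refine ⟨0, fun _ => 1, fun _ => A, fun _ => zero_le_one, fun _ => hA, by simp, ?_⟩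
  funext i j
  simp

/-- μ(cl conv_⊗(Ψ)) = μ(Ψ) for bounded Ψ. -/
theorem muSet_closure_maxConv {n : ℕ} (Ψ : Set (Fin n → Fin n → ℝ))
    (hb : Bornology.IsBounded Ψ) (hΨ : ∀ A ∈ Ψ, ∀ i j, 0 ≤ A i j) :
    muSet (closure (maxConv Ψ)) = muSet Ψ := by
  rcases Set.eq_empty_or_nonempty Ψ with hE | ⟨A0, hA0⟩
  · have hmc : maxConv Ψ = ∅ := by
      apply Set.eq_empty_iff_forall_notMem.2
      rintro B ⟨k, α, A, h1, h2, h3, h4⟩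
      exact (hE ▸ h2 0 : (A 0) ∈ (∅ : Set _))
    rw [hmc, closure_empty, hE]
  · obtain ⟨C, hC⟩ := isBounded_iff_forall_norm_le.1 hb
    -- entrywise bound on Ψ
    have hbdd : ∀ i j, BddAbove ((fun A => A i j) '' Ψ) := by
      intro i j
      refine ⟨C, ?_⟩
      rintro _ ⟨A, hA, rfl⟩
      calc A i j ≤ |A i j| := le_abs_self _
        _ = ‖A i j‖ := rfl
        _ ≤ ‖A i‖ := norm_le_pi_norm (A i) j
        _ ≤ ‖A‖ := norm_le_pi_norm A i
        _ ≤ C := hC A hA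
    -- bound for maxConv members
    have hconv : ∀ B ∈ maxConv Ψ, ∀ i j, B i j ≤ Ssup Ψ i j := by
      rintro B ⟨k, α, A, hα, hAΨ, hsup, rfl⟩ i j
      refine ciSup_le fun l => ?_
      have hα1 : α l ≤ 1 := hsup ▸ le_ciSup (Set.Finite.bddAbove (Set.finite_range α)) l
      have hAle : A l i j ≤ Ssup Ψ i j :=
        le_csSup (hbdd i j) ⟨A l, hAΨ l, rfl⟩
      calc α l * A l i j ≤ 1 * A l i j :=
            mul_le_mul_of_nonneg_right hα1 (hΨ _ (hAΨ l) i j)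
        _ = A l i j := one_mul _
        _ ≤ Ssup Ψ i j := hAle
    -- bound passes to closure
    have hcl : ∀ B ∈ closure (maxConv Ψ), ∀ i j, B i j ≤ Ssup Ψ i j := by
      intro B hB i j
      have hclosed : IsClosed {B : Fin n → Fin n → ℝ | B i j ≤ Ssup Ψ i j} :=
        isClosed_le ((continuous_apply j).comp (continuous_apply i)) continuous_const
      exact closure_minimal (fun B hB => hconv B hB i j) hclosed hB
    have hmem0 : A0 ∈ closure (maxConv Ψ) :=
      subset_closure (subset_maxConv Ψ hA0)
    have hSeq : Ssup (closure (maxConv Ψ)) = Ssup Ψ := by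
      funext i j
      apply le_antisymm
      · refine csSup_le ⟨A0 i j, ⟨A0, hmem0, rfl⟩⟩ ?_
        rintro _ ⟨B, hB, rfl⟩
        exact hcl B hB i j
      · refine csSup_le ⟨A0 i j, ⟨A0, hA0, rfl⟩⟩ ?_
        rintro _ ⟨A, hA, rfl⟩
        refine le_csSup ⟨Ssup Ψ i j, ?_⟩ ⟨A, subset_closure (subset_maxConv Ψ hA), rfl⟩
        rintro _ ⟨B, hB, rfl⟩
        exact hcl B hB i j
    unfold muSet
    rw [hSeq]

end MaxAlg
end

section
/- For any bounded set Ψ ⊆ ℝ₊^{n×n}, the max-algebraic joint spectral radius satisfies μ(Ψ) = inf over all norms ‖·‖ on ℝⁿ of sup_{A ∈ Ψ} η_‖·‖(A), where η_‖·‖(A) = max_{x > 0} ‖A ⊗ x‖/‖x‖ is the max-induced norm. -/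
open scoped BigOperators

namespace MaxAlg

variable {n : ℕ}

open Fin.NatCast Fin.CommRing

/-! ### generic sup helpers -/

lemma bddAbove_range_fin {ι : Type*} [Finite ι] (f : ι → ℝ) : BddAbove (Set.range f) :=
  (Set.finite_range f).bddAbove

lemma mul_ciSup_fin {ι : Type*} [Finite ι] [Nonempty ι] (f : ι → ℝ) {c : ℝ} (hc : 0 ≤ c) :
    c * ⨆ i, f i = ⨆ i, c * f i := by
  obtain ⟨i0, hi0⟩ := Finite.exists_max f
  apply le_antisymm
  · have : ⨆ i, f i = f i0 :=
      le_antisymm (ciSup_le hi0) (le_ciSup (bddAbove_range_fin f) i0)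
    rw [this]
    exact le_ciSup (bddAbove_range_fin fun i => c * f i) i0
  · exact ciSup_le fun i =>
      mul_le_mul_of_nonneg_left (le_ciSup (bddAbove_range_fin f) i) hc

/-! ### basic norm facts -/

lemma NormOn.f_zero (N : NormOn n) : N.f 0 = 0 := (N.eq_zero 0).mpr rfl

lemma NormOn.f_neg (N : NormOn n) (x : Fin n → ℝ) : N.f (-x) = N.f x := by
  have := N.smul (-1) x
  simpa using this

lemma NormOn.f_nonneg (N : NormOn n) (x : Fin n → ℝ) : 0 ≤ N.f x := by
  have h := N.add x (-x)
  rw [add_neg_cancel, N.f_zero, N.f_neg] at h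
  linarith

lemma NormOn.f_pos (N : NormOn n) {x : Fin n → ℝ} (hx : x ≠ 0) : 0 < N.f x :=
  lt_of_le_of_ne (N.f_nonneg x) (fun h => hx ((N.eq_zero x).mp h.symm))

lemma NormOn.f_sum_le (N : NormOn n) {ι : Type*} (s : Finset ι) (g : ι → (Fin n → ℝ)) :
    N.f (∑ i ∈ s, g i) ≤ ∑ i ∈ s, N.f (g i) := by
  classical
  induction s using Finset.induction_on with
  | empty => simp [N.f_zero]
  | @insert a s' h ih =>
    rw [Finset.sum_insert h, Finset.sum_insert h]
    exact le_trans (N.add _ _) (by linarith)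

/-- standard basis vector -/
def bvec (i : Fin n) : Fin n → ℝ := fun j => if i = j then 1 else 0

lemma NormOn.f_le_norm (N : NormOn n) :
    ∃ C > 0, ∀ x : Fin n → ℝ, N.f x ≤ C * ‖x‖ := by
  classical
  refine ⟨(∑ i : Fin n, N.f (bvec i)) + 1, ?_, fun x => ?_⟩
  case _ =>
    have hsum : ∑ i : Fin n, N.f (bvec i) ≥ 0 :=
      Finset.sum_nonneg fun i _ => N.f_nonneg _
    linarith
  have hx : x = ∑ i : Fin n, x i • bvec i := pi_eq_sum_univ x
  have hsum : ∑ i : Fin n, N.f (bvec i) ≥ 0 :=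
    Finset.sum_nonneg fun i _ => N.f_nonneg _
  calc N.f x = N.f (∑ i : Fin n, x i • bvec i) := by rw [← hx]
    _ ≤ ∑ i : Fin n, N.f (x i • bvec i) := N.f_sum_le _ _
    _ = ∑ i : Fin n, |x i| * N.f (bvec i) := by
        simp [N.smul]
    _ ≤ ∑ i : Fin n, ‖x‖ * N.f (bvec i) := by
        refine Finset.sum_le_sum fun i _ => ?_
        exact mul_le_mul_of_nonneg_right
          (by simpa [Real.norm_eq_abs] using norm_le_pi_norm x i) (N.f_nonneg _)
    _ = (∑ i : Fin n, N.f (bvec i)) * ‖x‖ := by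
        rw [Finset.sum_mul]
        exact Finset.sum_congr rfl fun i _ => mul_comm _ _
    _ ≤ _ := by nlinarith [norm_nonneg x]

lemma NormOn.norm_le_f [Nonempty (Fin n)] (N : NormOn n) :
    ∃ c > 0, ∀ x : Fin n → ℝ, c * ‖x‖ ≤ N.f x := by
  obtain ⟨C, hC, hCle⟩ := N.f_le_norm
  -- N.f is Lipschitz hence continuous
  have hlip : ∀ x y : Fin n → ℝ, dist (N.f x) (N.f y) ≤ C * dist x y := by
    intro x y
    rw [Real.dist_eq, dist_eq_norm]
    have h1 : N.f x ≤ N.f y + N.f (x - y) := by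
      have := N.add y (x - y); simpa using this
    have h2 : N.f y ≤ N.f x + N.f (x - y) := by
      have := N.add x (y - x)
      have hn : N.f (y - x) = N.f (x - y) := by
        rw [← N.f_neg (x - y)]; congr 1; abel
      rw [hn] at this; simpa using this
    have h3 := hCle (x - y)
    rw [abs_le]; constructor <;> nlinarith
  have hcont : Continuous N.f := by
    refine (LipschitzWith.of_dist_le_mul (K := ⟨C, hC.le⟩) ?_).continuous
    intro x y; exact hlip x y
  have hsne : (Metric.sphere (0 : Fin n → ℝ) 1).Nonempty := by
    have : Nontrivial (Fin n → ℝ) := by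
      refine ⟨fun _ => 0, fun _ => 1, fun h => ?_⟩
      have := congrFun h (Classical.arbitrary _)
      norm_num at this
    exact NormedSpace.sphere_nonempty.mpr zero_le_one
  obtain ⟨x0, hx0mem, hx0min⟩ := (isCompact_sphere (0 : Fin n → ℝ) 1).exists_isMinOn hsne
    hcont.continuousOn
  have hx0norm : ‖x0‖ = 1 := by simpa using hx0mem
  have hx0ne : x0 ≠ 0 := by
    intro h; rw [h] at hx0norm; simp at hx0norm
  refine ⟨N.f x0, N.f_pos hx0ne, fun x => ?_⟩
  rcases eq_or_ne x 0 with rfl | hx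
  · simp [N.f_zero]
  · have hnx : (0:ℝ) < ‖x‖ := norm_pos_iff.mpr hx
    have hmem : ‖x‖⁻¹ • x ∈ Metric.sphere (0 : Fin n → ℝ) 1 := by
      simp [norm_smul, abs_of_pos (inv_pos.mpr hnx), inv_mul_cancel₀ hnx.ne']
    have hmin := hx0min hmem
    have heq : N.f x = ‖x‖ * N.f (‖x‖⁻¹ • x) := by
      have := N.smul ‖x‖ (‖x‖⁻¹ • x)
      rw [smul_smul, mul_inv_cancel₀ hnx.ne', one_smul] at this
      rw [this, abs_of_pos hnx]
    rw [heq, mul_comm (N.f x0) ‖x‖]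
    exact mul_le_mul_of_nonneg_left (by simpa using hmin) hnx.le


/-! ### maxVec and Ssup basics -/

section MatBasics

variable [Nonempty (Fin n)]

lemma maxVec_nonneg {A : Fin n → Fin n → ℝ} {x : Fin n → ℝ}
    (hA : ∀ i j, 0 ≤ A i j) (hx : ∀ i, 0 ≤ x i) (i : Fin n) : 0 ≤ maxVec A x i :=
  Real.iSup_nonneg fun j => mul_nonneg (hA i j) (hx j)

lemma le_maxVec {A : Fin n → Fin n → ℝ} {x : Fin n → ℝ} (i j : Fin n) :
    A i j * x j ≤ maxVec A x i := by
  simp only [maxVec]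
  exact le_ciSup (bddAbove_range_fin fun j => A i j * x j) j

lemma maxVec_le {A : Fin n → Fin n → ℝ} {x : Fin n → ℝ} {i : Fin n} {c : ℝ}
    (h : ∀ j, A i j * x j ≤ c) : maxVec A x i ≤ c := ciSup_le h

lemma maxVec_zero (A : Fin n → Fin n → ℝ) : maxVec A 0 = 0 := by
  funext i
  simp [maxVec]

lemma norm_maxVec_le {A : Fin n → Fin n → ℝ} {x : Fin n → ℝ} {M : ℝ}
    (hA : ∀ i j, 0 ≤ A i j) (hx : ∀ i, 0 ≤ x i) (hM : ∀ i j, A i j ≤ M) :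
    ‖maxVec A x‖ ≤ M * ‖x‖ := by
  have hM0 : 0 ≤ M := le_trans (hA (Classical.arbitrary _) (Classical.arbitrary _))
    (hM _ _)
  rw [pi_norm_le_iff_of_nonneg (by positivity)]
  intro i
  rw [Real.norm_eq_abs, abs_of_nonneg (maxVec_nonneg hA hx i)]
  refine maxVec_le fun j => ?_
  have h1 : x j ≤ ‖x‖ := le_trans (le_abs_self _)
    (by simpa [Real.norm_eq_abs] using norm_le_pi_norm x j)
  exact mul_le_mul (hM i j) h1 (hx j) hM0

end MatBasics

section SsupBasics

variable {Ψ : Set (Fin n → Fin n → ℝ)}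

lemma Ssup_bddAbove (hb : Bornology.IsBounded Ψ) (i j : Fin n) :
    BddAbove ((fun A => A i j) '' Ψ) := by
  obtain ⟨C, hC⟩ := isBounded_iff_forall_norm_le.mp hb
  refine ⟨C, fun y hy => ?_⟩
  obtain ⟨A, hA, rfl⟩ := hy
  calc A i j ≤ |A i j| := le_abs_self _
    _ ≤ ‖A i‖ := by simpa [Real.norm_eq_abs] using norm_le_pi_norm (A i) j
    _ ≤ ‖A‖ := norm_le_pi_norm A i
    _ ≤ C := hC A hA

lemma Ssup_nonneg (hΨ : ∀ A ∈ Ψ, ∀ i j, 0 ≤ A i j) (i j : Fin n) :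
    0 ≤ Ssup Ψ i j := by
  refine Real.sSup_nonneg fun y hy => ?_
  obtain ⟨A, hA, rfl⟩ := hy
  exact hΨ A hA i j

lemma le_Ssup (hb : Bornology.IsBounded Ψ) {A : Fin n → Fin n → ℝ} (hA : A ∈ Ψ)
    (i j : Fin n) : A i j ≤ Ssup Ψ i j :=
  le_csSup (Ssup_bddAbove hb i j) ⟨A, hA, rfl⟩

lemma Ssup_entry_bound (hb : Bornology.IsBounded Ψ) :
    ∃ M : ℝ, 0 ≤ M ∧ ∀ A ∈ Ψ, ∀ i j, |A i j| ≤ M := by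
  obtain ⟨C, hC⟩ := isBounded_iff_forall_norm_le.mp hb
  refine ⟨max C 0, le_max_right _ _, fun A hA i j => ?_⟩
  calc |A i j| ≤ ‖A i‖ := by simpa [Real.norm_eq_abs] using norm_le_pi_norm (A i) j
    _ ≤ ‖A‖ := norm_le_pi_norm A i
    _ ≤ max C 0 := le_trans (hC A hA) (le_max_left _ _)

end SsupBasics

/-! ### mu basics -/

lemma mu_bddAbove_inner (A : Fin n → Fin n → ℝ) (k : Fin n) :
    BddAbove (Set.range fun c : {f : Fin (k.1 + 1) → Fin n // Function.Injective f} =>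
      (∏ j : Fin (k.1 + 1), A (c.1 j) (c.1 (j + 1))) ^ ((1 : ℝ) / ((k.1 : ℝ) + 1))) :=
  bddAbove_range_fin _

lemma mu_nonneg {A : Fin n → Fin n → ℝ} (hA : ∀ i j, 0 ≤ A i j) : 0 ≤ mu A :=
  Real.iSup_nonneg fun k => Real.iSup_nonneg fun c =>
    Real.rpow_nonneg (Finset.prod_nonneg fun j _ => hA _ _) _

lemma cycle_le_mu {A : Fin n → Fin n → ℝ} (k : Fin n)
    (c : {f : Fin (k.1 + 1) → Fin n // Function.Injective f}) :
    (∏ j : Fin (k.1 + 1), A (c.1 j) (c.1 (j + 1))) ^ ((1 : ℝ) / ((k.1 : ℝ) + 1)) ≤ mu A := by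
  refine le_trans (le_ciSup (mu_bddAbove_inner A k) c) ?_
  simp only [mu]
  exact le_ciSup (bddAbove_range_fin fun k : Fin n =>
    ⨆ c : {f : Fin (k.1 + 1) → Fin n // Function.Injective f},
      (∏ j : Fin (k.1 + 1), A (c.1 j) (c.1 (j + 1))) ^ ((1 : ℝ) / ((k.1 : ℝ) + 1))) k

lemma mu_le {A : Fin n → Fin n → ℝ} [Nonempty (Fin n)] {R : ℝ} (hR : 0 ≤ R)
    (h : ∀ (k : Fin n) (c : {f : Fin (k.1 + 1) → Fin n // Function.Injective f}),
      (∏ j : Fin (k.1 + 1), A (c.1 j) (c.1 (j + 1))) ^ ((1 : ℝ) / ((k.1 : ℝ) + 1)) ≤ R) :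
    mu A ≤ R := by
  refine ciSup_le fun k => ?_
  rcases isEmpty_or_nonempty {f : Fin (k.1 + 1) → Fin n // Function.Injective f} with he | hne
  · rw [Real.iSup_of_isEmpty]; exact hR
  · exact ciSup_le fun c => h k c


/-! ### eta basics -/

section EtaBasics

variable [Nonempty (Fin n)] (N : NormOn n)

instance posvec_nonempty : Nonempty {x : Fin n → ℝ // (∀ i, 0 ≤ x i) ∧ x ≠ 0} := by
  refine ⟨⟨fun _ => 1, fun i => zero_le_one, ?_⟩⟩
  intro h
  have := congrFun h (Classical.arbitrary _)
  norm_num at this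

lemma eta_nonneg (A : Fin n → Fin n → ℝ) : 0 ≤ eta N A :=
  Real.iSup_nonneg fun x => div_nonneg (N.f_nonneg _) (N.f_nonneg _)

lemma ratio_le {A : Fin n → Fin n → ℝ} {M cl Cu : ℝ}
    (hA : ∀ i j, 0 ≤ A i j) (hM : ∀ i j, A i j ≤ M)
    (hcl : 0 < cl) (hCu : 0 < Cu)
    (hl : ∀ x, cl * ‖x‖ ≤ N.f x) (hu : ∀ x : Fin n → ℝ, N.f x ≤ Cu * ‖x‖)
    (x : {x : Fin n → ℝ // (∀ i, 0 ≤ x i) ∧ x ≠ 0}) :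
    N.f (maxVec A x.1) / N.f x.1 ≤ Cu * M / cl := by
  obtain ⟨x, hx, hxne⟩ := x
  have hfx : 0 < N.f x := N.f_pos hxne
  have hM0 : 0 ≤ M := le_trans (hA (Classical.arbitrary _) (Classical.arbitrary _)) (hM _ _)
  have h1 : ‖maxVec A x‖ ≤ M * ‖x‖ := norm_maxVec_le hA hx hM
  have h2 : N.f (maxVec A x) ≤ Cu * (M * ‖x‖) :=
    le_trans (hu _) (mul_le_mul_of_nonneg_left h1 hCu.le)
  have h3 : cl * ‖x‖ ≤ N.f x := hl x
  rw [div_le_iff₀ hfx]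
  have hK : Cu * M / cl * cl = Cu * M := by field_simp
  have h4 : Cu * M / cl * (cl * ‖x‖) ≤ Cu * M / cl * N.f x :=
    mul_le_mul_of_nonneg_left h3 (by positivity)
  nlinarith [h4, hK]

/-- eta is bounded via the entry bound of A -/
lemma eta_le_of_entry_bound {A : Fin n → Fin n → ℝ} {M cl Cu : ℝ}
    (hA : ∀ i j, 0 ≤ A i j) (hM : ∀ i j, A i j ≤ M)
    (hcl : 0 < cl) (hCu : 0 < Cu)
    (hl : ∀ x, cl * ‖x‖ ≤ N.f x) (hu : ∀ x : Fin n → ℝ, N.f x ≤ Cu * ‖x‖) :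
    eta N A ≤ Cu * M / cl :=
  ciSup_le (ratio_le N hA hM hcl hCu hl hu)

/-- the defining ratios of eta are bounded above -/
lemma eta_bddAbove {A : Fin n → Fin n → ℝ} (hA : ∀ i j, 0 ≤ A i j) :
    BddAbove (Set.range fun x : {x : Fin n → ℝ // (∀ i, 0 ≤ x i) ∧ x ≠ 0} =>
      N.f (maxVec A x.1) / N.f x.1) := by
  obtain ⟨Cu, hCu, hu⟩ := N.f_le_norm
  obtain ⟨cl, hcl, hl⟩ := N.norm_le_f
  obtain ⟨M, hM⟩ := Finite.exists_max (fun p : Fin n × Fin n => A p.1 p.2)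
  refine ⟨Cu * (A M.1 M.2) / cl, fun y hy => ?_⟩
  obtain ⟨x, rfl⟩ := hy
  exact ratio_le N hA (fun i j => hM (i, j)) hcl hCu hl hu x

lemma f_maxVec_le_eta {A : Fin n → Fin n → ℝ} (hA : ∀ i j, 0 ≤ A i j)
    {x : Fin n → ℝ} (hx : ∀ i, 0 ≤ x i) :
    N.f (maxVec A x) ≤ eta N A * N.f x := by
  rcases eq_or_ne x 0 with rfl | hxne
  · rw [maxVec_zero, N.f_zero, mul_zero]
  · have hfx : 0 < N.f x := N.f_pos hxne
    have h := le_ciSup (eta_bddAbove N hA) (⟨x, hx, hxne⟩ :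
      {x : Fin n → ℝ // (∀ i, 0 ≤ x i) ∧ x ≠ 0})
    rw [div_le_iff₀ hfx] at h
    exact h

end EtaBasics


/-! ### Part B : mu (Ssup Ψ) ≤ sup of eta, for every norm -/

lemma pow_le_of_pow_le_mul {P Q K : ℝ} (hP : 0 ≤ P) (hQ : 0 ≤ Q)
    (h : ∀ m : ℕ, P ^ (m + 1) ≤ K * Q ^ (m + 1)) : P ≤ Q := by
  by_contra hc
  push_neg at hc
  have hPpos : 0 < P := lt_of_le_of_lt hQ hc
  rcases hQ.eq_or_lt with hQ0 | hQpos
  · have := h 0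
    rw [← hQ0] at this
    simp at this
    nlinarith
  · have hone : 1 < P / Q := (one_lt_div hQpos).mpr hc
    obtain ⟨m, hm⟩ := pow_unbounded_of_one_lt (max K 1) hone
    have hm1 : 1 ≤ m := by
      by_contra hm0
      push_neg at hm0
      interval_cases m
      simp at hm
    obtain ⟨m', rfl⟩ : ∃ m', m = m' + 1 := ⟨m - 1, by omega⟩
    have hh := h m'
    have hQp : (0:ℝ) < Q ^ (m' + 1) := pow_pos hQpos _
    have : (P / Q) ^ (m' + 1) ≤ K := by
      rw [div_pow, div_le_iff₀ hQp]
      exact hh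
    exact absurd (le_trans this (le_max_left K 1)) (not_le.mpr hm)

/-- the chain of vectors obtained by repeatedly applying matrices
  a (-(1)), a (-(2)), ... to the basis vector at c0 -/
noncomputable def chainVec {k : ℕ} (a : Fin (k+1) → Fin n → Fin n → ℝ) (c0 : Fin n) :
    ℕ → Fin n → ℝ
  | 0 => bvec c0
  | (t+1) => maxVec (a (-((t+1 : ℕ) : Fin (k+1)))) (chainVec a c0 t)

section Chain

variable [Nonempty (Fin n)] {Ψ : Set (Fin n → Fin n → ℝ)} (N : NormOn n)
variable {k : ℕ} {a : Fin (k+1) → Fin n → Fin n → ℝ} {c : Fin (k+1) → Fin n}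

lemma chainVec_nonneg (hA : ∀ l i j, 0 ≤ a l i j) (c0 : Fin n) :
    ∀ t i, 0 ≤ chainVec a c0 t i := by
  intro t
  induction t with
  | zero => intro i; simp only [chainVec, bvec]; positivity
  | succ t ih => exact maxVec_nonneg (hA _) ih

lemma etaSup_bddAbove (hb : Bornology.IsBounded Ψ) (hΨ : ∀ A ∈ Ψ, ∀ i j, 0 ≤ A i j) :
    BddAbove (Set.range fun A : Ψ => eta N A.1) := by
  obtain ⟨M, hM0, hM⟩ := Ssup_entry_bound hb
  obtain ⟨Cu, hCu, hu⟩ := N.f_le_norm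
  obtain ⟨cl, hcl, hl⟩ := N.norm_le_f
  refine ⟨Cu * M / cl, fun y hy => ?_⟩
  obtain ⟨⟨A, hA⟩, rfl⟩ := hy
  exact eta_le_of_entry_bound N (hΨ A hA)
    (fun i j => le_trans (le_abs_self _) (hM A hA i j)) hcl hCu hl hu

lemma etaSup_nonneg : 0 ≤ ⨆ A : Ψ, eta N A.1 :=
  Real.iSup_nonneg fun A => eta_nonneg N A.1

lemma chain_f_le (hb : Bornology.IsBounded Ψ) (hΨ : ∀ A ∈ Ψ, ∀ i j, 0 ≤ A i j)
    (ha : ∀ l, a l ∈ Ψ) (c0 : Fin n) (t : ℕ) :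
    N.f (chainVec a c0 t) ≤ (⨆ A : Ψ, eta N A.1) ^ t * N.f (bvec c0) := by
  set R := ⨆ A : Ψ, eta N A.1 with hR
  have hR0 : 0 ≤ R := etaSup_nonneg N
  induction t with
  | zero => simp [chainVec]
  | succ t ih =>
    have h1 : N.f (chainVec a c0 (t+1)) ≤
        eta N (a (-((t+1 : ℕ) : Fin (k+1)))) * N.f (chainVec a c0 t) :=
      f_maxVec_le_eta N (hΨ _ (ha _)) (chainVec_nonneg (fun l => hΨ _ (ha l)) c0 t)
    have h2 : eta N (a (-((t+1 : ℕ) : Fin (k+1)))) ≤ R :=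
      le_ciSup (etaSup_bddAbove N hb hΨ) (⟨_, ha _⟩ : Ψ)
    calc N.f (chainVec a c0 (t+1)) ≤ eta N (a (-((t+1 : ℕ) : Fin (k+1)))) *
          N.f (chainVec a c0 t) := h1
      _ ≤ R * (R ^ t * N.f (bvec c0)) := by
          apply mul_le_mul h2 ih (N.f_nonneg _)
          exact hR0
      _ = R ^ (t+1) * N.f (bvec c0) := by ring

lemma chain_entry (hA : ∀ l i j, 0 ≤ a l i j) (t : ℕ) :
    ∏ s ∈ Finset.range t, a (-((s+1 : ℕ) : Fin (k+1))) (c (-((s+1 : ℕ) : Fin (k+1))))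
        (c (-((s+1 : ℕ) : Fin (k+1)) + 1))
      ≤ chainVec a (c 0) t (c (-((t : ℕ) : Fin (k+1)))) := by
  induction t with
  | zero =>
    simp only [Finset.range_zero, Finset.prod_empty, Nat.cast_zero, neg_zero, chainVec, bvec]
    simp
  | succ t ih =>
    rw [Finset.prod_range_succ]
    have hcast : (-(((t+1) : ℕ) : Fin (k+1))) + 1 = -((t : ℕ) : Fin (k+1)) := by
      push_cast
      ring
    have h1 : a (-((t+1 : ℕ) : Fin (k+1))) (c (-((t+1 : ℕ) : Fin (k+1))))
          (c (-((t+1 : ℕ) : Fin (k+1)) + 1)) *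
          chainVec a (c 0) t (c (-((t : ℕ) : Fin (k+1))))
        ≤ chainVec a (c 0) (t+1) (c (-((t+1 : ℕ) : Fin (k+1)))) := by
      show _ ≤ maxVec _ _ _
      rw [hcast]
      exact le_maxVec _ _
    refine le_trans ?_ h1
    rw [mul_comm (∏ _s ∈ Finset.range t, _) _]
    apply mul_le_mul_of_nonneg_left ih (hA _ _ _)

lemma periodic_prod (w : Fin (k+1) → ℝ) (m : ℕ) :
    ∏ s ∈ Finset.range (m * (k+1)), w (-((s+1 : ℕ) : Fin (k+1)))
      = (∏ j : Fin (k+1), w j) ^ m := by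
  induction m with
  | zero => simp
  | succ m ih =>
    have hsplit := Finset.prod_range_add
      (fun s => w (-((s+1 : ℕ) : Fin (k+1)))) (m * (k+1)) (k+1)
    have hstep : (m+1) * (k+1) = m * (k+1) + (k+1) := by ring
    rw [hstep, hsplit, ih]
    have hblock : ∏ s ∈ Finset.range (k+1), w (-((m * (k+1) + s + 1 : ℕ) : Fin (k+1)))
        = ∏ j : Fin (k+1), w j := by
      have hcast : ∀ s : ℕ, ((m * (k+1) + s + 1 : ℕ) : Fin (k+1)) = ((s+1 : ℕ) : Fin (k+1)) := by
        intro s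
        push_cast
        have hk0 : ((k : Fin (k+1)) + 1) = 0 := by
          rw [← Nat.cast_succ]
          exact Fin.natCast_self _
        rw [hk0]
        ring
      rw [Finset.prod_congr rfl (fun s _ => by rw [hcast s])]
      have hfin : ∏ s ∈ Finset.range (k+1), w (-((s+1 : ℕ) : Fin (k+1)))
          = ∏ j : Fin (k+1), w (-(j+1)) := by
        rw [← Fin.prod_univ_eq_prod_range (fun s => w (-((s+1 : ℕ) : Fin (k+1)))) (k+1)]
        refine Finset.prod_congr rfl fun j _ => ?_
        congr 1
        push_cast
        rfl
      rw [hfin]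
      have hinv : Function.Involutive (fun j : Fin (k+1) => -(j+1)) := by
        intro j; ring
      exact Equiv.prod_comp (Function.Involutive.toPerm _ hinv) w
    rw [hblock]
    ring

end Chain


lemma mu_le_etaSup [Nonempty (Fin n)] {Ψ : Set (Fin n → Fin n → ℝ)} (N : NormOn n)
    (hb : Bornology.IsBounded Ψ) (hΨ : ∀ A ∈ Ψ, ∀ i j, 0 ≤ A i j) :
    mu (Ssup Ψ) ≤ ⨆ A : Ψ, eta N A.1 := by
  set R := ⨆ A : Ψ, eta N A.1 with hRdef
  have hR0 : 0 ≤ R := etaSup_nonneg N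
  refine mu_le hR0 fun k c => ?_
  have hs0 : ∀ j, 0 ≤ Ssup Ψ (c.1 j) (c.1 (j+1)) := fun j => Ssup_nonneg hΨ _ _
  have hprod0 : 0 ≤ ∏ j : Fin (k.1+1), Ssup Ψ (c.1 j) (c.1 (j+1)) :=
    Finset.prod_nonneg fun j _ => hs0 j
  have key : ∏ j : Fin (k.1+1), Ssup Ψ (c.1 j) (c.1 (j+1)) ≤ R ^ (k.1+1) := by
    by_contra hlt
    push_neg at hlt
    have hRk0 : 0 ≤ R ^ (k.1+1) := by positivity
    have hspos : ∀ j : Fin (k.1+1), 0 < Ssup Ψ (c.1 j) (c.1 (j+1)) := by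
      intro j
      rcases (hs0 j).eq_or_lt with h0 | h
      · exfalso
        have hz : ∏ j : Fin (k.1+1), Ssup Ψ (c.1 j) (c.1 (j+1)) = 0 :=
          Finset.prod_eq_zero (Finset.mem_univ j) h0.symm
        rw [hz] at hlt
        exact absurd hlt (not_lt.mpr hRk0)
      · exact h
    have hprodpos : 0 < ∏ j : Fin (k.1+1), Ssup Ψ (c.1 j) (c.1 (j+1)) :=
      Finset.prod_pos fun j _ => hspos j
    have hΨne : Ψ.Nonempty := by
      by_contra hne
      rw [Set.not_nonempty_iff_eq_empty] at hne
      have hzero : Ssup Ψ (c.1 0) (c.1 (0+1)) = 0 := by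
        simp [Ssup, hne, Real.sSup_empty]
      exact (hspos 0).ne' hzero
    set Pd := ∏ j : Fin (k.1+1), Ssup Ψ (c.1 j) (c.1 (j+1)) with hPd
    set u : ℝ := R ^ (k.1+1) / Pd with hu
    have hu1 : u < 1 := (div_lt_one hprodpos).mpr hlt
    have hu0 : 0 ≤ u := by rw [hu]; exact div_nonneg hRk0 hprodpos.le
    set u' : ℝ := (u + 1)/2 with hu'
    have hu'0 : 0 < u' := by rw [hu']; linarith
    have hu'1 : u' < 1 := by rw [hu']; linarith
    have huu' : u < u' := by rw [hu']; linarith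
    set q : ℝ := u' ^ ((1:ℝ)/(k.1+1)) with hq
    have hq0 : 0 < q := Real.rpow_pos_of_pos hu'0 _
    have hq1 : q < 1 := Real.rpow_lt_one hu'0.le hu'1 (by positivity)
    have hqpow : q ^ (k.1+1) = u' := by
      rw [hq, ← Real.rpow_natCast (u' ^ ((1:ℝ)/(k.1+1))) (k.1+1), ← Real.rpow_mul hu'0.le]
      push_cast
      rw [one_div, inv_mul_cancel₀ (by positivity), Real.rpow_one]
    have hex : ∀ j : Fin (k.1+1), ∃ A ∈ Ψ,
        q * Ssup Ψ (c.1 j) (c.1 (j+1)) < A (c.1 j) (c.1 (j+1)) := by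
      intro j
      have hlt2 : q * Ssup Ψ (c.1 j) (c.1 (j+1)) < Ssup Ψ (c.1 j) (c.1 (j+1)) := by
        nlinarith [hspos j]
      obtain ⟨y, hy, hy2⟩ := exists_lt_of_lt_csSup (Set.Nonempty.image _ hΨne) hlt2
      obtain ⟨A, hA, rfl⟩ := hy
      exact ⟨A, hA, hy2⟩
    choose a haΨ halt using hex
    have hw0 : ∀ j, 0 ≤ a j (c.1 j) (c.1 (j+1)) := fun j => hΨ _ (haΨ j) _ _
    set w : Fin (k.1+1) → ℝ := fun j => a j (c.1 j) (c.1 (j+1)) with hwdef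
    have hP : R ^ (k.1+1) < ∏ j, w j := by
      have h1 : ∏ j : Fin (k.1+1), (q * Ssup Ψ (c.1 j) (c.1 (j+1))) ≤ ∏ j, w j :=
        Finset.prod_le_prod (fun j _ => mul_nonneg hq0.le (hs0 j)) (fun j _ => (halt j).le)
      have h2 : ∏ j : Fin (k.1+1), (q * Ssup Ψ (c.1 j) (c.1 (j+1))) = q^(k.1+1) * Pd := by
        rw [Finset.prod_mul_distrib, Finset.prod_const, Finset.card_univ, Fintype.card_fin,
          hPd]
      have h4 : u * Pd = R ^ (k.1+1) := by
        rw [hu]; field_simp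
      nlinarith [hprodpos]
    obtain ⟨Cu, hCu, hufn⟩ := N.f_le_norm
    obtain ⟨cl, hcl, hlfn⟩ := N.norm_le_f
    have hfb : N.f (bvec (c.1 0)) ≤ Cu := by
      refine le_trans (hufn _) ?_
      have hb1 : ‖bvec (c.1 0)‖ ≤ 1 := by
        rw [pi_norm_le_iff_of_nonneg zero_le_one]
        intro i
        rw [Real.norm_eq_abs]
        simp only [bvec]
        split <;> simp
      nlinarith
    have hmain : ∀ m : ℕ, (∏ j, w j) ^ (m+1) ≤ (Cu/cl) * (R^(k.1+1)) ^ (m+1) := by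
      intro m
      have hent := chain_entry (a := a) (c := c.1) (fun l => hΨ _ (haΨ l)) ((m+1) * (k.1+1))
      have hk0 : ((k.1 : Fin (k.1+1)) + 1) = 0 := by
        rw [← Nat.cast_succ]; exact Fin.natCast_self _
      have hcast0 : (((m+1) * (k.1+1) : ℕ) : Fin (k.1+1)) = 0 := by
        push_cast
        rw [hk0, mul_zero]
      rw [hcast0, neg_zero] at hent
      have hper : ∏ s ∈ Finset.range ((m+1) * (k.1+1)), w (-((s+1 : ℕ) : Fin (k.1+1)))
          = (∏ j, w j) ^ (m+1) := periodic_prod w (m+1)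
      have hent' : (∏ j, w j) ^ (m+1) ≤
          chainVec a (c.1 0) ((m+1) * (k.1+1)) (c.1 0) := by
        rw [← hper]
        exact hent
      set y := chainVec a (c.1 0) ((m+1) * (k.1+1)) with hy
      have hentnorm : y (c.1 0) ≤ ‖y‖ :=
        le_trans (le_abs_self _) (by simpa [Real.norm_eq_abs] using norm_le_pi_norm y (c.1 0))
      have hnormf : cl * ‖y‖ ≤ N.f y := hlfn y
      have hfy : N.f y ≤ R ^ ((m+1) * (k.1+1)) * N.f (bvec (c.1 0)) :=
        chain_f_le N hb hΨ haΨ (c.1 0) _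
      have hRt : R ^ ((m+1) * (k.1+1)) = (R^(k.1+1)) ^ (m+1) := by
        rw [mul_comm, pow_mul]
      have hfy2 : N.f y ≤ (R^(k.1+1)) ^ (m+1) * Cu := by
        rw [← hRt]
        calc N.f y ≤ R ^ ((m+1) * (k.1+1)) * N.f (bvec (c.1 0)) := hfy
          _ ≤ R ^ ((m+1) * (k.1+1)) * Cu := by
              apply mul_le_mul_of_nonneg_left hfb (by positivity)
      calc (∏ j, w j) ^ (m+1) ≤ y (c.1 0) := hent'
        _ ≤ ‖y‖ := hentnorm
        _ ≤ N.f y / cl := by rw [le_div_iff₀ hcl]; linarith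
        _ ≤ ((R^(k.1+1)) ^ (m+1) * Cu) / cl := by
            apply div_le_div_of_nonneg_right hfy2 hcl.le
        _ = (Cu/cl) * (R^(k.1+1)) ^ (m+1) := by ring
    have hfinal : ∏ j, w j ≤ R^(k.1+1) :=
      pow_le_of_pow_le_mul (Finset.prod_nonneg fun j _ => hw0 j) hRk0 hmain
    exact absurd hfinal (not_le.mpr hP)
  calc (∏ j : Fin (k.1+1), Ssup Ψ (c.1 j) (c.1 (j+1))) ^ ((1:ℝ)/((k.1:ℝ)+1))
      ≤ (R ^ (k.1+1)) ^ ((1:ℝ)/((k.1:ℝ)+1)) :=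
        Real.rpow_le_rpow hprod0 key (by positivity)
    _ = R := by
        rw [← Real.rpow_natCast R (k.1+1), ← Real.rpow_mul hR0]
        push_cast
        rw [mul_one_div, div_self (by positivity), Real.rpow_one]


/-! ### Part A : construction of a norm witnessing mu -/

/-- iterated max-power of B applied to the all-ones vector -/
noncomputable def kleeneW (B : Fin n → Fin n → ℝ) : ℕ → Fin n → ℝ
  | 0 => fun _ => 1
  | (m+1) => maxVec B (kleeneW B m)

/-- weight of a walk of length m -/
noncomputable def wt (B : Fin n → Fin n → ℝ) (m : ℕ) (p : Fin (m+1) → Fin n) : ℝ :=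
  ∏ t : Fin m, B (p t.castSucc) (p t.succ)

/-- the Kleene-star vector -/
noncomputable def vK (B : Fin n → Fin n → ℝ) : Fin n → ℝ :=
  fun i => ⨆ m : Fin n, kleeneW B m.1 i

section PartA

variable [Nonempty (Fin n)] {B : Fin n → Fin n → ℝ}

lemma wt_nonneg (hB : ∀ i j, 0 ≤ B i j) (m : ℕ) (p : Fin (m+1) → Fin n) :
    0 ≤ wt B m p :=
  Finset.prod_nonneg fun t _ => hB _ _

lemma kleeneW_nonneg (hB : ∀ i j, 0 ≤ B i j) : ∀ m i, 0 ≤ kleeneW B m i := by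
  intro m
  induction m with
  | zero => intro i; exact zero_le_one
  | succ m ih => exact maxVec_nonneg hB ih

lemma wt_succ (m : ℕ) (p : Fin (m+2) → Fin n) :
    wt B (m+1) p = B (p 0) (p 1) * wt B m (p ∘ Fin.succ) := by
  rw [wt, Fin.prod_univ_succ]
  have h1 : B (p (0 : Fin (m+1)).castSucc) (p (0 : Fin (m+1)).succ) = B (p 0) (p 1) := rfl
  rw [h1]
  congr 1

lemma wt_le_kleeneW (hB : ∀ i j, 0 ≤ B i j) :
    ∀ (m : ℕ) (p : Fin (m+1) → Fin n), wt B m p ≤ kleeneW B m (p 0) := by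
  intro m
  induction m with
  | zero => intro p; simp [wt, kleeneW]
  | succ m ih =>
    intro p
    rw [wt_succ]
    calc B (p 0) (p 1) * wt B m (p ∘ Fin.succ)
        ≤ B (p 0) (p 1) * kleeneW B m (p 1) := by
          have := ih (p ∘ Fin.succ)
          have h01 : (p ∘ Fin.succ) 0 = p 1 := by
            rw [Function.comp_apply]; congr 1
          rw [h01] at this
          exact mul_le_mul_of_nonneg_left this (hB _ _)
      _ ≤ kleeneW B (m+1) (p 0) := le_maxVec _ _

lemma kleeneW_le_sup_wt (hB : ∀ i j, 0 ≤ B i j) :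
    ∀ (m : ℕ) (i : Fin n),
      kleeneW B m i ≤ ⨆ p : {p : Fin (m+1) → Fin n // p 0 = i}, wt B m p.1 := by
  intro m
  induction m with
  | zero =>
    intro i
    have : wt B 0 (fun _ => i) = 1 := by simp [wt]
    calc kleeneW B 0 i = 1 := rfl
      _ ≤ _ := by
          rw [← this]
          exact le_ciSup (f := fun p : {p : Fin 1 → Fin n // p 0 = i} => wt B 0 p.1)
            (bddAbove_range_fin _) ⟨fun _ => i, rfl⟩
  | succ m ih =>
    intro i
    show maxVec B (kleeneW B m) i ≤ _
    refine maxVec_le fun j => ?_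
    haveI : Nonempty {p : Fin (m+1) → Fin n // p 0 = j} := ⟨⟨fun _ => j, rfl⟩⟩
    calc B i j * kleeneW B m j
        ≤ B i j * ⨆ p : {p : Fin (m+1) → Fin n // p 0 = j}, wt B m p.1 :=
          mul_le_mul_of_nonneg_left (ih j) (hB i j)
      _ = ⨆ p : {p : Fin (m+1) → Fin n // p 0 = j}, B i j * wt B m p.1 :=
          mul_ciSup_fin _ (hB i j)
      _ ≤ _ := by
          refine ciSup_le fun p => ?_
          have hcons : B i j * wt B m p.1 = wt B (m+1) (Fin.cons i p.1 : Fin (m+2) → Fin n) := by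
            rw [wt_succ]
            have h1 : (Fin.cons i p.1 : Fin (m+2) → Fin n) 0 = i := by simp
            have h2 : (Fin.cons i p.1 : Fin (m+2) → Fin n) 1 = p.1 0 := by
              have ho : (1 : Fin (m+2)) = Fin.succ 0 := by
                ext
                simp
              rw [ho, Fin.cons_succ]
            have h3 : (Fin.cons i p.1 : Fin (m+2) → Fin n) ∘ Fin.succ = p.1 := by
              funext t; rw [Function.comp_apply, Fin.cons_succ]
            rw [h1, h2, h3, p.2]
          rw [hcons]
          exact le_ciSup
            (f := fun p' : {p' : Fin (m+2) → Fin n // p' 0 = i} => wt B (m+1) p'.1)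
            (bddAbove_range_fin _) ⟨(Fin.cons i p.1 : Fin (m+2) → Fin n), by simp⟩

lemma one_le_vK (hB : ∀ i j, 0 ≤ B i j) (i : Fin n) : 1 ≤ vK B i := by
  have h0 : kleeneW B (0:ℕ) i = 1 := rfl
  rw [vK, ← h0]
  have hn : 0 < n := Fin.pos_iff_nonempty.mpr ‹_›
  exact le_ciSup (f := fun m : Fin n => kleeneW B m.1 i) (bddAbove_range_fin _) ⟨0, hn⟩

lemma vK_pos (hB : ∀ i j, 0 ≤ B i j) (i : Fin n) : 0 < vK B i :=
  lt_of_lt_of_le one_pos (one_le_vK hB i)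

end PartA


section Splice

variable [Nonempty (Fin n)] {B : Fin n → Fin n → ℝ}

lemma wt_eq_range (B : Fin n → Fin n → ℝ) (m : ℕ) (p : Fin (m+1) → Fin n) :
    wt B m p = ∏ t ∈ Finset.range m,
      B (p ⟨min t m, Nat.lt_succ_of_le (Nat.min_le_right t m)⟩)
        (p ⟨min (t+1) m, Nat.lt_succ_of_le (Nat.min_le_right (t+1) m)⟩) := by
  rw [wt, ← Fin.prod_univ_eq_prod_range (fun t => B
      (p ⟨min t m, Nat.lt_succ_of_le (Nat.min_le_right t m)⟩)
      (p ⟨min (t+1) m, Nat.lt_succ_of_le (Nat.min_le_right (t+1) m)⟩)) m]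
  refine Finset.prod_congr rfl fun t _ => ?_
  congr 1
  · congr 1
    ext
    simp only [Fin.coe_castSucc]
    omega
  · congr 1
    ext
    simp only [Fin.val_succ]
    omega

set_option maxHeartbeats 2000000 in
lemma wt_le_vK (hB : ∀ i j, 0 ≤ B i j)
    (hcyc : ∀ (d : ℕ) [NeZero d], ∀ cc : Fin d → Fin n, Function.Injective cc →
      ∏ j : Fin d, B (cc j) (cc (j+1)) ≤ 1) :
    ∀ (m : ℕ) (p : Fin (m+1) → Fin n), wt B m p ≤ vK B (p 0) := by
  intro m
  induction m using Nat.strong_induction_on with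
  | _ m ih =>
  intro p
  by_cases hmn : m < n
  · refine le_trans (wt_le_kleeneW hB m p) ?_
    rw [vK]
    exact le_ciSup (f := fun m' : Fin n => kleeneW B m'.1 (p 0))
      (bddAbove_range_fin _) ⟨m, hmn⟩
  · push_neg at hmn
    classical
    have hcard : Fintype.card (Fin n) < Fintype.card (Fin (m+1)) := by
      simp only [Fintype.card_fin]; omega
    obtain ⟨x, y, hxy, hpxy⟩ := Fintype.exists_ne_map_eq_of_card_lt p hcard
    have hD : ∃ dd : ℕ, 0 < dd ∧ ∃ a b : Fin (m+1), b.1 = a.1 + dd ∧ p a = p b := by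
      have hvalne : x.1 ≠ y.1 := fun h => hxy (Fin.ext h)
      rcases hvalne.lt_or_gt with h | h
      · exact ⟨y.1 - x.1, by omega, x, y, by omega, hpxy⟩
      · exact ⟨x.1 - y.1, by omega, y, x, by omega, hpxy.symm⟩
    set d := Nat.find hD with hd
    have hspec : 0 < d ∧ ∃ a b : Fin (m+1), b.1 = a.1 + d ∧ p a = p b := Nat.find_spec hD
    have hdmin : ∀ d' < d, ¬(0 < d' ∧ ∃ a b : Fin (m+1), b.1 = a.1 + d' ∧ p a = p b) := by
      intro d' hd'
      exact Nat.find_min hD (by rw [← hd]; exact hd')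
    clear_value d
    obtain ⟨hd0, a, b, hb, hpab⟩ := hspec
    haveI : NeZero d := ⟨hd0.ne'⟩
    have hdm : a.1 + d ≤ m := by
      have := b.2
      omega
    have pc : ∀ (u v : Fin (m+1)), u.1 = v.1 → p u = p v :=
      fun u v h => congrArg p (Fin.ext h)
    set P : ℕ → Fin n := fun t => p ⟨min t m, Nat.lt_succ_of_le (Nat.min_le_right t m)⟩
      with hP
    set F : ℕ → ℝ := fun t => B (P t) (P (t+1)) with hF
    have hPeq : ∀ t, (h : t ≤ m) → P t = p ⟨t, by omega⟩ := by
      intro t h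
      exact pc _ _ (by simp only; omega)
    set e := m - (a.1 + d) with he
    have hme : m = a.1 + (d + e) := by omega
    set m' := a.1 + e with hm'
    have hm'lt : m' < m := by omega
    set p2 : Fin (m'+1) → Fin n := fun t =>
      if t.1 < a.1 then p ⟨t.1, by omega⟩ else p ⟨t.1 + d, by omega⟩ with hp2
    set P2 : ℕ → Fin n := fun t => p2 ⟨min t m', Nat.lt_succ_of_le (Nat.min_le_right t m')⟩
      with hP2
    set F2 : ℕ → ℝ := fun t => B (P2 t) (P2 (t+1)) with hF2
    have hp2eq : ∀ t, (h : t ≤ m') → P2 t =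
        if t < a.1 then p ⟨t, by omega⟩ else p ⟨t + d, by omega⟩ := by
      intro t h
      simp only [hP2, hp2]
      have hmin : min t m' = t := by omega
      by_cases hc : t < a.1
      · rw [if_pos (by omega : min t m' < a.1), if_pos hc]
        exact pc _ _ (by simp only; omega)
      · rw [if_neg (by omega : ¬ min t m' < a.1), if_neg hc]
        exact pc _ _ (by simp only; omega)
    have hP2a : ∀ t, t ≤ a.1 → P2 t = P t := by
      intro t ht
      rw [hp2eq t (by omega), hPeq t (by omega)]
      by_cases hc : t < a.1
      · rw [if_pos hc]
      · have hta : t = a.1 := by omega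
        rw [if_neg hc]
        have h1 : p ⟨t + d, by omega⟩ = p b := pc _ _ (by simp only; omega)
        rw [h1, ← hpab]
        exact pc _ _ (by simp only; omega)
    have hP2shift : ∀ s, s ≤ e → P2 (a.1 + s) = P (a.1 + d + s) := by
      intro s hs
      rw [hp2eq (a.1 + s) (by omega), hPeq (a.1 + d + s) (by omega),
        if_neg (by omega : ¬ a.1 + s < a.1)]
      exact pc _ _ (by simp only; omega)
    set cc : Fin d → Fin n := fun j => p ⟨a.1 + j.1, by omega⟩ with hcc
    have hinj : Function.Injective cc := by
      intro j1 j2 hj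
      by_contra hne
      have hvalne : j1.1 ≠ j2.1 := fun h => hne (Fin.ext h)
      rcases hvalne.lt_or_gt with h | h
      · exact hdmin (j2.1 - j1.1) (by omega) ⟨by omega,
          ⟨a.1 + j1.1, by omega⟩, ⟨a.1 + j2.1, by omega⟩, by simp only; omega, hj⟩
      · exact hdmin (j1.1 - j2.1) (by omega) ⟨by omega,
          ⟨a.1 + j2.1, by omega⟩, ⟨a.1 + j1.1, by omega⟩, by simp only; omega, hj.symm⟩
    have hcycle : ∏ j : Fin d, B (cc j) (cc (j+1)) ≤ 1 := hcyc d cc hinj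
    have hcyc0 : 0 ≤ ∏ j : Fin d, B (cc j) (cc (j+1)) :=
      Finset.prod_nonneg fun j _ => hB _ _
    have hwt : wt B m p = ∏ t ∈ Finset.range m, F t := wt_eq_range B m p
    have hwt2 : wt B m' p2 = ∏ t ∈ Finset.range m', F2 t := wt_eq_range B m' p2
    have hsplit : ∏ t ∈ Finset.range m, F t =
        (∏ t ∈ Finset.range a.1, F t) * ((∏ s ∈ Finset.range d, F (a.1 + s)) *
          (∏ s ∈ Finset.range e, F (a.1 + (d + s)))) := by
      conv_lhs => rw [hme]
      rw [Finset.prod_range_add, Finset.prod_range_add]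
    have hsplit2 : ∏ t ∈ Finset.range m', F2 t =
        (∏ t ∈ Finset.range a.1, F2 t) * (∏ s ∈ Finset.range e, F2 (a.1 + s)) := by
      conv_lhs => rw [hm']
      rw [Finset.prod_range_add]
    have hL : ∏ t ∈ Finset.range a.1, F2 t = ∏ t ∈ Finset.range a.1, F t := by
      refine Finset.prod_congr rfl fun t ht => ?_
      rw [Finset.mem_range] at ht
      simp only [hF2, hF]
      rw [hP2a t (by omega), hP2a (t+1) (by omega)]
    have hR2 : ∏ s ∈ Finset.range e, F2 (a.1 + s) =
        ∏ s ∈ Finset.range e, F (a.1 + (d + s)) := by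
      refine Finset.prod_congr rfl fun s hs => ?_
      rw [Finset.mem_range] at hs
      simp only [hF2, hF]
      have h1 : a.1 + s + 1 = a.1 + (s+1) := by omega
      rw [hP2shift s (by omega), h1, hP2shift (s+1) (by omega)]
      have h2 : a.1 + d + s = a.1 + (d + s) := by omega
      have h3 : a.1 + d + (s+1) = a.1 + (d + s) + 1 := by omega
      rw [h2, h3]
    have hmid : ∏ s ∈ Finset.range d, F (a.1 + s) = ∏ j : Fin d, B (cc j) (cc (j+1)) := by
      rw [← Fin.prod_univ_eq_prod_range (fun s => F (a.1 + s)) d]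
      refine Finset.prod_congr rfl fun j _ => ?_
      have hjd : j.1 < d := j.2
      have hone : (1 : Fin d).1 = 1 % d := rfl
      have hval : ((j+1 : Fin d)).1 = (j.1 + 1) % d := by
        rw [Fin.val_add, hone]
        conv_rhs => rw [Nat.add_mod, Nat.mod_eq_of_lt hjd]
      simp only [hF, hcc]
      congr 1
      · rw [hPeq (a.1 + j.1) (by omega)]
      · by_cases hj : j.1 + 1 < d
        · have hv2 : ((j+1 : Fin d)).1 = j.1 + 1 := by
            rw [hval]
            exact Nat.mod_eq_of_lt hj
          rw [hPeq (a.1 + j.1 + 1) (by omega)]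
          exact pc _ _ (by simp only; omega)
        · have hjd2 : j.1 + 1 = d := by omega
          have hv2 : ((j+1 : Fin d)).1 = 0 := by
            rw [hval, hjd2]
            exact Nat.mod_self d
          have h1 : a.1 + j.1 + 1 = a.1 + d := by omega
          rw [h1, hPeq (a.1 + d) (by omega)]
          have h2 : p ⟨a.1 + d, by omega⟩ = p b := pc _ _ (by simp only; omega)
          rw [h2, ← hpab]
          exact pc _ _ (by simp only; omega)
    have hfin : wt B m p = (∏ j : Fin d, B (cc j) (cc (j+1))) * wt B m' p2 := by
      rw [hwt, hsplit, hwt2, hsplit2, hL, hR2, hmid]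
      ring
    have hnn : 0 ≤ wt B m' p2 := wt_nonneg hB _ _
    have hle1 : wt B m p ≤ wt B m' p2 := by
      rw [hfin]
      nlinarith
    have hz2 : ((0 : Fin (m+1))).1 = 0 := rfl
    have hp20 : p2 0 = p 0 := by
      have h0 : p2 0 = P2 0 := by
        rw [hP2]
        exact congrArg p2 (Fin.ext (by simp))
      rw [h0, hp2eq 0 (by omega)]
      by_cases hc : 0 < a.1
      · rw [if_pos hc]
        exact pc _ _ (by first | (simp; omega) | simp | omega)
      · rw [if_neg hc]
        refine Eq.trans (pc _ b (by simp only; omega)) ?_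
        rw [← hpab]
        exact pc _ _ (by first | (simp; omega) | simp | omega)
    calc wt B m p ≤ wt B m' p2 := hle1
      _ ≤ vK B (p2 0) := ih m' hm'lt p2
      _ = vK B (p 0) := by rw [hp20]

end Splice


section PartA2

variable [Nonempty (Fin n)] {B : Fin n → Fin n → ℝ}

lemma kleeneW_le_vK (hB : ∀ i j, 0 ≤ B i j)
    (hcyc : ∀ (d : ℕ) [NeZero d], ∀ cc : Fin d → Fin n, Function.Injective cc →
      ∏ j : Fin d, B (cc j) (cc (j+1)) ≤ 1) (m : ℕ) (i : Fin n) :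
    kleeneW B m i ≤ vK B i := by
  refine le_trans (kleeneW_le_sup_wt hB m i) ?_
  haveI : Nonempty {p : Fin (m+1) → Fin n // p 0 = i} := ⟨⟨fun _ => i, rfl⟩⟩
  refine ciSup_le fun p => ?_
  obtain ⟨p, hp⟩ := p
  subst hp
  exact wt_le_vK hB hcyc m p

lemma maxVec_vK_le (hB : ∀ i j, 0 ≤ B i j)
    (hcyc : ∀ (d : ℕ) [NeZero d], ∀ cc : Fin d → Fin n, Function.Injective cc →
      ∏ j : Fin d, B (cc j) (cc (j+1)) ≤ 1) (i : Fin n) :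
    maxVec B (vK B) i ≤ vK B i := by
  refine maxVec_le fun j => ?_
  rw [vK, mul_ciSup_fin _ (hB i j)]
  refine ciSup_le fun m' => ?_
  calc B i j * kleeneW B m'.1 j ≤ maxVec B (kleeneW B m'.1) i := le_maxVec i j
    _ = kleeneW B (m'.1+1) i := rfl
    _ ≤ vK B i := kleeneW_le_vK hB hcyc _ i

lemma cycle_div_le_one {S : Fin n → Fin n → ℝ} (hS : ∀ i j, 0 ≤ S i j)
    {lam : ℝ} (hlam : mu S < lam) (hlam0 : 0 < lam) :
    ∀ (d : ℕ) [NeZero d], ∀ (cc : Fin d → Fin n), Function.Injective cc →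
      ∏ j : Fin d, (S (cc j) (cc (j+1)) / lam) ≤ 1 := by
  intro d hdz cc hinj
  have hd0 : 0 < d := Nat.pos_of_ne_zero (NeZero.ne d)
  have hdn : d ≤ n := by simpa using Fintype.card_le_of_injective cc hinj
  obtain ⟨k', rfl⟩ : ∃ k', d = k'+1 := ⟨d-1, by omega⟩
  have hkn : k' < n := by omega
  have hcycmu := cycle_le_mu (A := S) ⟨k', hkn⟩ ⟨cc, hinj⟩
  set PS := ∏ j : Fin (k'+1), S (cc j) (cc (j+1)) with hPS
  have hPS0 : 0 ≤ PS := Finset.prod_nonneg fun j _ => hS _ _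
  have h1 : PS ^ ((1:ℝ)/((k' : ℝ)+1)) < lam := lt_of_le_of_lt hcycmu hlam
  have hroot0 : 0 ≤ PS ^ ((1:ℝ)/((k' : ℝ)+1)) := Real.rpow_nonneg hPS0 _
  have hps : (PS ^ ((1:ℝ)/((k' : ℝ)+1))) ^ (k'+1) = PS := by
    rw [← Real.rpow_natCast (PS ^ ((1:ℝ)/((k' : ℝ)+1))) (k'+1), ← Real.rpow_mul hPS0]
    push_cast
    rw [one_div, inv_mul_cancel₀ (by positivity), Real.rpow_one]
  have h2 : PS < lam ^ (k'+1) := by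
    calc PS = (PS ^ ((1:ℝ)/((k' : ℝ)+1))) ^ (k'+1) := hps.symm
      _ < lam ^ (k'+1) := pow_lt_pow_left₀ h1 hroot0 (by omega)
  have h3 : ∏ j : Fin (k'+1), (S (cc j) (cc (j+1)) / lam) = PS / lam ^ (k'+1) := by
    rw [Finset.prod_div_distrib, Finset.prod_const, Finset.card_univ, Fintype.card_fin, hPS]
  rw [h3, div_le_one (pow_pos hlam0 _)]
  exact h2.le

lemma exists_norm_le {Ψ : Set (Fin n → Fin n → ℝ)}
    (hb : Bornology.IsBounded Ψ) (hΨ : ∀ A ∈ Ψ, ∀ i j, 0 ≤ A i j)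
    {lam : ℝ} (hlam : mu (Ssup Ψ) < lam) :
    ∃ N : NormOn n, (⨆ A : Ψ, eta N A.1) ≤ lam := by
  have hS : ∀ i j, 0 ≤ Ssup Ψ i j := Ssup_nonneg hΨ
  have hmu0 : 0 ≤ mu (Ssup Ψ) := mu_nonneg hS
  have hlam0 : 0 < lam := lt_of_le_of_lt hmu0 hlam
  set S := Ssup Ψ with hSdef
  set B : Fin n → Fin n → ℝ := fun i j => S i j / lam with hBdef
  have hB : ∀ i j, 0 ≤ B i j := fun i j => div_nonneg (hS i j) hlam0.le
  have hcyc : ∀ (d : ℕ) [NeZero d], ∀ cc : Fin d → Fin n, Function.Injective cc →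
      ∏ j : Fin d, B (cc j) (cc (j+1)) ≤ 1 := by
    intro d hdz cc hinj
    exact cycle_div_le_one hS hlam hlam0 d cc hinj
  set v := vK B with hv
  have hv1 : ∀ i, 1 ≤ v i := one_le_vK hB
  have hvpos : ∀ i, 0 < v i := vK_pos hB
  have hBv : ∀ i, maxVec B v i ≤ v i := maxVec_vK_le hB hcyc
  have hSv : ∀ i j, S i j * v j ≤ lam * v i := by
    intro i j
    have heq : S i j * v j = lam * (B i j * v j) := by
      rw [hBdef]
      field_simp
    rw [heq]
    calc lam * (B i j * v j) ≤ lam * maxVec B v i :=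
          mul_le_mul_of_nonneg_left (le_maxVec i j) hlam0.le
      _ ≤ lam * v i := mul_le_mul_of_nonneg_left (hBv i) hlam0.le
  set Nf : (Fin n → ℝ) → ℝ := fun x => ⨆ i, |x i| / v i with hNf
  have hNf0 : ∀ x, 0 ≤ Nf x := fun x =>
    Real.iSup_nonneg fun i => div_nonneg (abs_nonneg _) (hvpos i).le
  have prop1 : ∀ x, Nf x = 0 ↔ x = 0 := by
    intro x
    constructor
    · intro h
      funext i
      have hle : |x i| / v i ≤ Nf x :=
        le_ciSup (f := fun i => |x i| / v i) (bddAbove_range_fin _) i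
      rw [h] at hle
      have h0 : |x i| / v i = 0 :=
        le_antisymm hle (div_nonneg (abs_nonneg _) (hvpos i).le)
      rcases div_eq_zero_iff.mp h0 with h1 | h1
      · exact abs_eq_zero.mp h1
      · exact absurd h1 (hvpos i).ne'
    · rintro rfl
      simp only [hNf, Pi.zero_apply, abs_zero, zero_div]
      exact ciSup_const
  have prop2 : ∀ (a : ℝ) (x : Fin n → ℝ), Nf (a • x) = |a| * Nf x := by
    intro a x
    calc Nf (a • x) = ⨆ i, |a| * (|x i| / v i) := by
          show (⨆ i, |(a • x) i| / v i) = ⨆ i, |a| * (|x i| / v i)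
          exact iSup_congr fun i => by simp [abs_mul, mul_div_assoc]
      _ = |a| * Nf x := (mul_ciSup_fin _ (abs_nonneg a)).symm
  have prop3 : ∀ x y : Fin n → ℝ, Nf (x + y) ≤ Nf x + Nf y := by
    intro x y
    refine ciSup_le fun i => ?_
    calc |(x + y) i| / v i ≤ (|x i| + |y i|) / v i := by
          apply div_le_div_of_nonneg_right _ (hvpos i).le
          exact abs_add_le _ _
      _ = |x i| / v i + |y i| / v i := add_div _ _ _
      _ ≤ Nf x + Nf y := add_le_add
          (le_ciSup (f := fun i => |x i| / v i) (bddAbove_range_fin _) i)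
          (le_ciSup (f := fun i => |y i| / v i) (bddAbove_range_fin _) i)
  refine ⟨⟨Nf, prop1, prop2, prop3⟩, ?_⟩
  rcases isEmpty_or_nonempty Ψ with he | hne
  · rw [Real.iSup_of_isEmpty]
    exact hlam0.le
  · refine ciSup_le fun A => ?_
    show (⨆ x : {x : Fin n → ℝ // (∀ i, 0 ≤ x i) ∧ x ≠ 0},
      Nf (maxVec A.1 x.1) / Nf x.1) ≤ lam
    refine ciSup_le fun xx => ?_
    obtain ⟨x, hx, hxne⟩ := xx
    have hfxpos : 0 < Nf x :=
      lt_of_le_of_ne (hNf0 x) (fun h => hxne ((prop1 x).mp h.symm))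
    have hkey : Nf (maxVec A.1 x) ≤ lam * Nf x := by
      refine ciSup_le fun i => ?_
      have hAx : 0 ≤ maxVec A.1 x i := maxVec_nonneg (hΨ _ A.2) hx i
      rw [abs_of_nonneg hAx, div_le_iff₀ (hvpos i)]
      refine maxVec_le fun j => ?_
      have hxj : x j ≤ v j * Nf x := by
        have h1 : |x j| / v j ≤ Nf x :=
          le_ciSup (f := fun i => |x i| / v i) (bddAbove_range_fin _) j
        rw [div_le_iff₀ (hvpos j)] at h1
        calc x j ≤ |x j| := le_abs_self _
          _ ≤ Nf x * v j := h1
          _ = v j * Nf x := mul_comm _ _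
      calc A.1 i j * x j ≤ S i j * x j :=
            mul_le_mul_of_nonneg_right (le_Ssup hb A.2 i j) (hx j)
        _ ≤ S i j * (v j * Nf x) := mul_le_mul_of_nonneg_left hxj (hS i j)
        _ = (S i j * v j) * Nf x := by ring
        _ ≤ (lam * v i) * Nf x := mul_le_mul_of_nonneg_right (hSv i j) (hNf0 x)
        _ = lam * Nf x * v i := by ring
    rw [div_le_iff₀ hfxpos]
    exact hkey

end PartA2


/-- a trivial norm for n = 0 -/
def trivNorm : NormOn 0 where
  f := fun _ => 0
  eq_zero := fun x => ⟨fun _ => funext fun i => i.elim0, fun _ => rfl⟩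
  smul := fun a x => by simp
  add := fun x y => by norm_num

theorem muSet_eq_iInf_eta' {n : ℕ} (Ψ : Set (Fin n → Fin n → ℝ))
    (hb : Bornology.IsBounded Ψ) (hΨ : ∀ A ∈ Ψ, ∀ i j, 0 ≤ A i j) :
    muSet Ψ = ⨅ N : NormOn n, ⨆ A : Ψ, eta N A.1 := by
  rcases Nat.eq_zero_or_pos n with hn | hn
  · subst hn
    have h1 : muSet Ψ = 0 := by
      rw [muSet, mu]
      exact Real.iSup_of_isEmpty _
    haveI hie : IsEmpty {x : Fin 0 → ℝ // (∀ i, 0 ≤ x i) ∧ x ≠ 0} := by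
      refine ⟨fun x => x.2.2 ?_⟩
      funext i
      exact i.elim0
    have h2 : ∀ (N : NormOn 0) (A : Fin 0 → Fin 0 → ℝ), eta N A = 0 := fun N A =>
      Real.iSup_of_isEmpty _
    have h3 : ∀ N : NormOn 0, (⨆ A : Ψ, eta N A.1) = 0 := by
      intro N
      rcases isEmpty_or_nonempty Ψ with he | hne
      · exact Real.iSup_of_isEmpty _
      · calc (⨆ A : Ψ, eta N A.1) = ⨆ _ : Ψ, (0:ℝ) := by
              congr 1
              funext A
              exact h2 N A.1
          _ = 0 := ciSup_const
    rw [h1]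
    haveI : Nonempty (NormOn 0) := ⟨trivNorm⟩
    rw [show (fun N : NormOn 0 => ⨆ A : Ψ, eta N A.1) = fun _ => (0:ℝ) from
      funext fun N => h3 N]
    exact ciInf_const.symm
  · haveI : Nonempty (Fin n) := ⟨⟨0, hn⟩⟩
    obtain ⟨N0, hN0⟩ := exists_norm_le hb hΨ (lt_add_one (mu (Ssup Ψ)))
    haveI : Nonempty (NormOn n) := ⟨N0⟩
    have hbdd : BddBelow (Set.range fun N : NormOn n => ⨆ A : Ψ, eta N A.1) := by
      refine ⟨0, fun y hy => ?_⟩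
      obtain ⟨N, rfl⟩ := hy
      exact etaSup_nonneg N
    apply le_antisymm
    · exact le_ciInf fun N => mu_le_etaSup N hb hΨ
    · by_contra hcon
      push_neg at hcon
      rw [muSet] at hcon
      set I := ⨅ N : NormOn n, ⨆ A : Ψ, eta N A.1 with hI
      obtain ⟨N, hN⟩ := exists_norm_le hb hΨ
        (lam := (mu (Ssup Ψ) + I)/2) (by linarith)
      have hle : I ≤ ⨆ A : Ψ, eta N A.1 := ciInf_le hbdd N
      linarith


/-- μ(Ψ) is the infimum over all norms of the sup of the
max-induced norms of matrices in Ψ. -/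
theorem muSet_eq_iInf_eta {n : ℕ} (Ψ : Set (Fin n → Fin n → ℝ))
    (hb : Bornology.IsBounded Ψ) (hΨ : ∀ A ∈ Ψ, ∀ i j, 0 ≤ A i j) :
    muSet Ψ = ⨅ N : NormOn n, ⨆ A : Ψ, eta N A.1 := by
  exact muSet_eq_iInf_eta' Ψ hb hΨ

end MaxAlg
end

section
/- If Ψ ⊆ ℝ₊^{n×n} is bounded and μ(A) ≤ 1 for every A in the semigroup generated by Ψ under max-multiplication, then this semigroup is bounded (in any matrix norm). -/
open scoped BigOperators

namespace MaxAlg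

/-- weight of a path: start node `i`, list of (matrix, next node) steps -/
noncomputable def pw (i : Fin n) : List ((Fin n → Fin n → ℝ) × Fin n) → ℝ
  | [] => 1
  | (A, k) :: L => A i k * pw k L

/-- end node of a path -/
def endN (i : Fin n) : List ((Fin n → Fin n → ℝ) × Fin n) → Fin n
  | [] => i
  | (_, k) :: L => endN k L

/-- max product of the matrices of a path -/
noncomputable def prodL : List ((Fin n → Fin n → ℝ) × Fin n) → (Fin n → Fin n → ℝ)
  | [] => idMat n
  | (A, _) :: L => maxMul A (prodL L)

lemma prodSet_nonneg (Ψ : Set (Fin n → Fin n → ℝ)) (hΨ : ∀ A ∈ Ψ, ∀ i j, 0 ≤ A i j) :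
    ∀ m, ∀ B ∈ prodSet Ψ m, ∀ i j, 0 ≤ B i j := by
  intro m
  induction m with
  | zero =>
    rintro B hB i j
    rw [prodSet, Set.mem_singleton_iff] at hB
    subst hB
    unfold idMat; split <;> norm_num
  | succ m ih =>
    rintro B hB i j
    rw [prodSet] at hB
    obtain ⟨A, hA, B', hB', rfl⟩ := hB
    exact Real.iSup_nonneg fun k => mul_nonneg (hΨ A hA i k) (ih B' hB' k j)

lemma entry_le_pw (Ψ : Set (Fin n → Fin n → ℝ)) (hΨ : ∀ A ∈ Ψ, ∀ i j, 0 ≤ A i j) :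
    ∀ m, ∀ B ∈ prodSet Ψ m, ∀ i j : Fin n,
      B i j ≤ 0 ∨ ∃ L, (∀ p ∈ L, p.1 ∈ Ψ) ∧ L.length = m ∧ B i j ≤ pw i L := by
  intro m
  induction m with
  | zero =>
    rintro B hB i j
    rw [prodSet, Set.mem_singleton_iff] at hB
    subst hB
    by_cases hij : i = j
    · right; exact ⟨[], by simp, rfl, by simp [idMat, hij, pw]⟩
    · left; simp [idMat, hij]
  | succ m ih =>
    rintro B hB i j
    rw [prodSet] at hB
    obtain ⟨A, hA, B', hB', rfl⟩ := hB
    have hne : Nonempty (Fin n) := ⟨i⟩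
    obtain ⟨k₀, hk₀⟩ := Finite.exists_max (fun k => A i k * B' k j)
    have hle : maxMul A B' i j ≤ A i k₀ * B' k₀ j := ciSup_le hk₀
    rcases ih B' hB' k₀ j with hneg | ⟨L, h1, h2, h3⟩
    · left
      have := hΨ A hA i k₀
      nlinarith
    · right
      refine ⟨(A, k₀) :: L, ?_, by simp [h2], ?_⟩
      · rintro p hp
        rcases List.mem_cons.1 hp with rfl | hp
        · exact hA
        · exact h1 p hp
      · calc maxMul A B' i j ≤ A i k₀ * B' k₀ j := hle
          _ ≤ A i k₀ * pw k₀ L := mul_le_mul_of_nonneg_left h3 (hΨ A hA i k₀)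
          _ = pw i ((A, k₀) :: L) := rfl

lemma endN_append (i : Fin n) (L₁ L₂ : List ((Fin n → Fin n → ℝ) × Fin n)) :
    endN i (L₁ ++ L₂) = endN (endN i L₁) L₂ := by
  induction L₁ generalizing i with
  | nil => rfl
  | cons p L ih => obtain ⟨A, k⟩ := p; simp [endN, ih]

lemma pw_append (i : Fin n) (L₁ L₂ : List ((Fin n → Fin n → ℝ) × Fin n)) :
    pw i (L₁ ++ L₂) = pw i L₁ * pw (endN i L₁) L₂ := by
  induction L₁ generalizing i with
  | nil => simp [pw, endN]
  | cons p L ih => obtain ⟨A, k⟩ := p; simp [pw, endN, ih]; ring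

lemma pw_nonneg (i : Fin n) (L : List ((Fin n → Fin n → ℝ) × Fin n))
    (h : ∀ p ∈ L, ∀ a b, 0 ≤ p.1 a b) : 0 ≤ pw i L := by
  induction L generalizing i with
  | nil => norm_num [pw]
  | cons p L ih =>
    obtain ⟨A, k⟩ := p
    exact mul_nonneg (h (A, k) (List.mem_cons_self) i k)
      (ih k fun p hp => h p (List.mem_cons_of_mem _ hp))

lemma prodL_mem (Ψ : Set (Fin n → Fin n → ℝ)) (L : List ((Fin n → Fin n → ℝ) × Fin n))
    (hL : ∀ p ∈ L, p.1 ∈ Ψ) : prodL L ∈ prodSet Ψ L.length := by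
  induction L with
  | nil =>
    rw [show ([] : List ((Fin n → Fin n → ℝ) × Fin n)).length = 0 from rfl, prodSet]
    exact Set.mem_singleton _
  | cons p L ih =>
    obtain ⟨A, k⟩ := p
    rw [List.length_cons, prodSet]
    exact ⟨A, hL (A, k) (List.mem_cons_self), prodL L,
      ih fun p hp => hL p (List.mem_cons_of_mem _ hp), rfl⟩

lemma pw_le_prodL (Ψ : Set (Fin n → Fin n → ℝ)) (hΨ : ∀ A ∈ Ψ, ∀ i j, 0 ≤ A i j)
    (L : List ((Fin n → Fin n → ℝ) × Fin n)) (hL : ∀ p ∈ L, p.1 ∈ Ψ) (i : Fin n) :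
    pw i L ≤ prodL L i (endN i L) := by
  induction L generalizing i with
  | nil => simp [pw, endN, prodL, idMat]
  | cons p L ih =>
    obtain ⟨A, k⟩ := p
    have hA : A ∈ Ψ := hL (A, k) (List.mem_cons_self)
    have hL' : ∀ p ∈ L, p.1 ∈ Ψ := fun p hp => hL p (List.mem_cons_of_mem _ hp)
    calc pw i ((A, k) :: L) = A i k * pw k L := rfl
      _ ≤ A i k * prodL L k (endN k L) :=
          mul_le_mul_of_nonneg_left (ih hL' k) (hΨ A hA i k)
      _ ≤ ⨆ k', A i k' * prodL L k' (endN k L) :=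
          le_ciSup (f := fun k' => A i k' * prodL L k' (endN k L))
            (Set.finite_range _).bddAbove k
      _ = prodL ((A, k) :: L) i (endN i ((A, k) :: L)) := rfl

lemma diag_le_one (Ψ : Set (Fin n → Fin n → ℝ)) (hΨ : ∀ A ∈ Ψ, ∀ i j, 0 ≤ A i j)
    (h : ∀ m : ℕ, ∀ A ∈ prodSet Ψ m, mu A ≤ 1)
    (m : ℕ) (B : Fin n → Fin n → ℝ) (hB : B ∈ prodSet Ψ m) (v : Fin n) : B v v ≤ 1 := by
  have hn : 0 < n := v.pos
  refine le_trans ?_ (h m B hB)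
  have hc : Function.Injective (fun _ : Fin ((⟨0, hn⟩ : Fin n).1 + 1) => v) :=
    fun a b _ => Subsingleton.elim (α := Fin 1) a b
  have key : B v v =
      (∏ j : Fin ((⟨0, hn⟩ : Fin n).1 + 1),
        B ((fun _ => v) j) ((fun _ => v) (j + 1))) ^
        ((1 : ℝ) / (((⟨0, hn⟩ : Fin n).1 : ℝ) + 1)) := by
    norm_num
  rw [key]
  calc _ ≤ ⨆ c : {f : Fin ((⟨0, hn⟩ : Fin n).1 + 1) → Fin n // Function.Injective f},
        (∏ j : Fin ((⟨0, hn⟩ : Fin n).1 + 1), B (c.1 j) (c.1 (j + 1))) ^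
          ((1 : ℝ) / (((⟨0, hn⟩ : Fin n).1 : ℝ) + 1)) :=
        le_ciSup (Set.finite_range _).bddAbove ⟨fun _ => v, hc⟩
    _ ≤ mu B := by
        rw [mu]
        exact le_ciSup (f := fun k : Fin n =>
          ⨆ c : {f : Fin (k.1 + 1) → Fin n // Function.Injective f},
            (∏ j : Fin (k.1 + 1), B (c.1 j) (c.1 (j + 1))) ^ ((1 : ℝ) / ((k.1 : ℝ) + 1)))
          (Set.finite_range _).bddAbove (⟨0, hn⟩ : Fin n)

lemma pw_le_pow (M : ℝ) (hM1 : 1 ≤ M)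
    (L : List ((Fin n → Fin n → ℝ) × Fin n))
    (hL : ∀ p ∈ L, ∀ a b, 0 ≤ p.1 a b ∧ p.1 a b ≤ M) (i : Fin n) :
    pw i L ≤ M ^ L.length := by
  induction L generalizing i with
  | nil => simp [pw]
  | cons p L ih =>
    obtain ⟨A, k⟩ := p
    have h1 := hL (A, k) (List.mem_cons_self)
    have hL' : ∀ p ∈ L, ∀ a b, 0 ≤ p.1 a b ∧ p.1 a b ≤ M :=
      fun p hp => hL p (List.mem_cons_of_mem _ hp)
    have hpw : 0 ≤ pw k L := pw_nonneg k L fun p hp a b => (hL' p hp a b).1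
    calc pw i ((A, k) :: L) = A i k * pw k L := rfl
      _ ≤ M * M ^ L.length := mul_le_mul (h1 i k).2 (ih hL' k) hpw (by linarith)
      _ = M ^ ((A, k) :: L).length := by rw [List.length_cons]; ring

lemma pw_bound (Ψ : Set (Fin n → Fin n → ℝ)) (hΨ : ∀ A ∈ Ψ, ∀ i j, 0 ≤ A i j)
    (h : ∀ m : ℕ, ∀ A ∈ prodSet Ψ m, mu A ≤ 1)
    (M : ℝ) (hM1 : 1 ≤ M) (hM : ∀ A ∈ Ψ, ∀ i j, A i j ≤ M) :
    ∀ m (L : List ((Fin n → Fin n → ℝ) × Fin n)), L.length = m →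
      (∀ p ∈ L, p.1 ∈ Ψ) → ∀ i : Fin n, pw i L ≤ M ^ n := by
  intro m
  induction m using Nat.strong_induction_on with
  | _ m ih =>
  intro L hlen hL i
  have hent : ∀ p ∈ L, ∀ a b, 0 ≤ p.1 a b ∧ p.1 a b ≤ M :=
    fun p hp a b => ⟨hΨ p.1 (hL p hp) a b, hM p.1 (hL p hp) a b⟩
  by_cases hmn : m ≤ n
  · calc pw i L ≤ M ^ L.length := pw_le_pow M hM1 L hent i
      _ ≤ M ^ n := pow_le_pow_right₀ hM1 (hlen ▸ hmn)
  · push_neg at hmn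
    have hninj : ¬Function.Injective (fun t : Fin (n + 1) => endN i (L.take t.1)) := by
      intro hinj
      have := Fintype.card_le_of_injective _ hinj
      simp at this
    obtain ⟨a, b, heq, hab⟩ := Function.not_injective_iff.1 hninj
    -- wlog a.1 < b.1
    obtain ⟨a', b', hab', heq'⟩ :
        ∃ a' b' : Fin (n + 1), a'.1 < b'.1 ∧
          endN i (L.take a'.1) = endN i (L.take b'.1) := by
      rcases lt_or_gt_of_ne (fun hh : a.1 = b.1 => hab (Fin.ext hh)) with hlt | hgt
      · exact ⟨a, b, hlt, heq⟩
      · exact ⟨b, a, hgt, heq.symm⟩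
    set a0 := a'.1
    set b0 := b'.1
    have hb0n : b0 ≤ n := Nat.lt_succ_iff.1 b'.2
    have hb0m : b0 ≤ m := le_of_lt (lt_of_le_of_lt hb0n hmn)
    set L1 := L.take a0 with hL1
    set Lmid := (L.drop a0).take (b0 - a0) with hLmid
    set L2 := L.drop b0 with hL2
    have htake : L.take b0 = L1 ++ Lmid := by
      rw [hL1, hLmid, ← List.take_add]
      congr 1
      omega
    have hsplit : L = L1 ++ (Lmid ++ L2) := by
      rw [← List.append_assoc, ← htake, hL2, List.take_append_drop]
    set v := endN i L1 with hv
    have hvmid : endN v Lmid = v := by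
      have h1 : endN i (L.take b0) = endN v Lmid := by
        rw [htake, endN_append]
      rw [← h1, ← heq']
    have hmem1 : ∀ p ∈ L1, p.1 ∈ Ψ := fun p hp => hL p (List.mem_of_mem_take hp)
    have hmem2 : ∀ p ∈ L2, p.1 ∈ Ψ := fun p hp => hL p (List.mem_of_mem_drop hp)
    have hmemmid : ∀ p ∈ Lmid, p.1 ∈ Ψ :=
      fun p hp => hL p (List.mem_of_mem_drop (List.mem_of_mem_take hp))
    have hmid1 : pw v Lmid ≤ 1 := by
      calc pw v Lmid ≤ prodL Lmid v (endN v Lmid) := pw_le_prodL Ψ hΨ Lmid hmemmid v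
        _ = prodL Lmid v v := by rw [hvmid]
        _ ≤ 1 := diag_le_one Ψ hΨ h Lmid.length (prodL Lmid) (prodL_mem Ψ Lmid hmemmid) v
    have hnn1 : 0 ≤ pw i L1 := pw_nonneg _ _ fun p hp a b => hΨ p.1 (hmem1 p hp) a b
    have hnn2 : 0 ≤ pw v L2 := pw_nonneg _ _ fun p hp a b => hΨ p.1 (hmem2 p hp) a b
    have hstep : pw i L ≤ pw i (L1 ++ L2) := by
      rw [hsplit, pw_append, pw_append, ← hv, hvmid, pw_append, ← hv]
      calc pw i L1 * (pw v Lmid * pw v L2)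
          ≤ pw i L1 * (1 * pw v L2) := by
            apply mul_le_mul_of_nonneg_left _ hnn1
            exact mul_le_mul_of_nonneg_right hmid1 hnn2
        _ = pw i L1 * pw v L2 := by ring
    have hlen12 : (L1 ++ L2).length < m := by
      rw [List.length_append, hL1, hL2, List.length_take, List.length_drop, hlen]
      omega
    have hmem12 : ∀ p ∈ L1 ++ L2, p.1 ∈ Ψ := by
      intro p hp
      rcases List.mem_append.1 hp with hp | hp
      · exact hmem1 p hp
      · exact hmem2 p hp
    exact hstep.trans (ih (L1 ++ L2).length hlen12 (L1 ++ L2) rfl hmem12 i)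

/-- if μ(A) ≤ 1 for every A in the semigroup generated by Ψ,
then the semigroup is bounded. -/
theorem semigroup_bounded {n : ℕ} (Ψ : Set (Fin n → Fin n → ℝ))
    (hb : Bornology.IsBounded Ψ) (hΨ : ∀ A ∈ Ψ, ∀ i j, 0 ≤ A i j)
    (h : ∀ m : ℕ, ∀ A ∈ prodSet Ψ m, mu A ≤ 1) :
    Bornology.IsBounded (⋃ m : ℕ, prodSet Ψ m) := by
  obtain ⟨r, hr⟩ := hb.subset_closedBall 0
  set M := max 1 r with hMdef
  have hM1 : (1 : ℝ) ≤ M := le_max_left _ _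
  have hM : ∀ A ∈ Ψ, ∀ i j, A i j ≤ M := by
    intro A hA i j
    have h1 : ‖A‖ ≤ r := by
      have := hr hA
      rwa [Metric.mem_closedBall, dist_zero_right] at this
    have h2 : |A i j| ≤ ‖A‖ := by
      calc |A i j| = ‖A i j‖ := (Real.norm_eq_abs _).symm
        _ ≤ ‖A i‖ := norm_le_pi_norm (A i) j
        _ ≤ ‖A‖ := norm_le_pi_norm A i
    calc A i j ≤ |A i j| := le_abs_self _
      _ ≤ r := h2.trans h1
      _ ≤ M := le_max_right _ _
  have hMn : (0 : ℝ) ≤ M ^ n := pow_nonneg (by linarith) n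
  have key : ∀ m, ∀ B ∈ prodSet Ψ m, ∀ i j, B i j ≤ M ^ n := by
    intro m B hB i j
    rcases entry_le_pw Ψ hΨ m B hB i j with h0 | ⟨L, h1, h2, h3⟩
    · exact h0.trans hMn
    · exact h3.trans (pw_bound Ψ hΨ h M hM1 hM m L h2 h1 i)
  refine (Metric.isBounded_closedBall (x := (0 : Fin n → Fin n → ℝ)) (r := M ^ n)).subset ?_
  rintro B hB
  obtain ⟨_, ⟨m, rfl⟩, hm⟩ := hB
  rw [Metric.mem_closedBall, dist_zero_right]
  refine (pi_norm_le_iff_of_nonneg hMn).2 fun i => (pi_norm_le_iff_of_nonneg hMn).2 fun j => ?_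
  rw [Real.norm_eq_abs, abs_le]
  have hnn := prodSet_nonneg Ψ hΨ m B hm i j
  exact ⟨by linarith, key m B hm i j⟩

end MaxAlg
end
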